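/- Let 1 ≤ t ≤ r, let H be a hereditary family with μ(H) ≥ 2r − t, let A be a non-empty subfamily of H^(r), let B be a non-empty s-uniform family that is not a trivial t-intersecting family, and suppose A and B are cross-t-intersecting. Then there exists a t-element set T such that |A| < (s(r−t)/(μ(H)−r)) · C(s,t) · |H^(r)(T)| and T ⊆ B₀ for some B₀ ∈ B. -/

import Mathlib

def Hereditary {α : Type*} [DecidableEq α] (F : Finset (Finset α)) : Prop :=
  ∀ A ∈ F, ∀ B ⊆ A, B ∈ F

noncomputable def mu {α : Type*} [DecidableEq α] (F : Finset (Finset α)) : ℕ :=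
  sInf {n | ∃ B ∈ F, (∀ A ∈ F, ¬ B ⊂ A) ∧ B.card = n}

open Finset

/-- Every member of a finite family extends to a maximal member, whose size is at least `mu`. -/
lemma exists_base {α : Type*} [DecidableEq α] {H : Finset (Finset α)} {D : Finset α}
    (hD : D ∈ H) : ∃ M ∈ H, D ⊆ M ∧ mu H ≤ M.card := by
  obtain ⟨M, hM, hmax⟩ : ∃ M ∈ H.filter (fun C => D ⊆ C), ∀ x ∈ H.filter (fun C => D ⊆ C), ¬ M < x := by
    obtain ⟨M, hM⟩ := Finset.exists_maximal (s := H.filter (fun C => D ⊆ C)) ⟨D, by simp [hD]⟩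
    exact ⟨M, hM.1, fun x hx hlt => hlt.not_ge (hM.2 hx hlt.le)⟩
  rw [mem_filter] at hM
  refine ⟨M, hM.1, hM.2, Nat.sInf_le ⟨M, hM.1, ?_, rfl⟩⟩
  intro C hC hMC
  exact hmax C (mem_filter.mpr ⟨hC, hM.2.trans hMC.subset⟩) hMC

/-- Key double-counting lemma: in a hereditary family with large `mu`, the number of `r`-sets
containing `insert x T` is small compared to those containing `T`. -/
lemma key_count {α : Type*} [DecidableEq α] {H : Finset (Finset α)} (hH : Hereditary H)
    {T : Finset α} {x : α} {r : ℕ} (hx : x ∉ T) (htr : T.card ≤ r) (hrmu : r ≤ mu H) :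
    (H.filter (fun E => E.card = r ∧ insert x T ⊆ E)).card * (mu H - T.card) ≤
    (H.filter (fun E => E.card = r ∧ T ⊆ E)).card * (r - T.card) := by
  classical
  set F := H.filter (fun E => E.card = r ∧ T ⊆ E) with hFdef
  set Fx := H.filter (fun E => E.card = r ∧ insert x T ⊆ E) with hFxdef
  have hFx : Fx = F.filter (fun E => x ∈ E) := by
    ext E
    simp only [hFxdef, hFdef, mem_filter, insert_subset_iff]
    tauto
  set F' := F.filter (fun E => x ∉ E) with hF'def
  -- double counting
  have hdouble : Fx.card * (mu H - r) ≤ F'.card * (r - T.card) := by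
    apply Finset.card_mul_le_card_mul (fun E E' => E.erase x ⊆ E')
    · -- lower bound on degrees from Fx
      intro E hE
      rw [hFxdef, mem_filter] at hE
      obtain ⟨hEH, hEcard, hExT⟩ := hE
      have hxE : x ∈ E := hExT (mem_insert_self x T)
      have hTE : T ⊆ E := (insert_subset_iff.mp hExT).2
      have hDH : E.erase x ∈ H := hH E hEH _ (erase_subset x E)
      obtain ⟨M, hMH, hDM, hMcard⟩ := exists_base hDH
      have hDcard : (E.erase x).card = r - 1 := by rw [card_erase_of_mem hxE, hEcard]
      have hrpos : 1 ≤ r := by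
        rw [← hEcard]; exact card_pos.mpr ⟨x, hxE⟩
      calc mu H - r ≤ (M \ E).card := by
            have h1 : M.card - E.card ≤ (M \ E).card := le_card_sdiff E M
            omega
        _ ≤ (Finset.bipartiteAbove (fun E E' => E.erase x ⊆ E') F' E).card := by
            apply card_le_card_of_injOn (fun y => insert y (E.erase x))
            · intro y hy
              rw [mem_coe, mem_sdiff] at hy
              have hyD : y ∉ E.erase x := fun h => hy.2 (mem_of_mem_erase h)
              have hyx : y ≠ x := fun h => hy.2 (h ▸ hxE)
              have hmem : insert y (E.erase x) ∈ H :=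
                hH M hMH _ (insert_subset hy.1 hDM)
              rw [mem_coe, Finset.bipartiteAbove, mem_filter, hF'def, mem_filter, hFdef, mem_filter]
              refine ⟨⟨⟨hmem, ?_, ?_⟩, ?_⟩, subset_insert _ _⟩
              · rw [card_insert_of_notMem hyD, hDcard]; omega
              · exact (subset_erase.mpr ⟨hTE, hx⟩).trans (subset_insert _ _)
              · simp only [mem_insert, not_or]
                exact ⟨fun h => hyx h.symm, notMem_erase x E⟩
            · intro y hy y' hy' heq
              simp only [coe_sdiff, Set.mem_diff, mem_coe] at hy hy'
              have hyD : y ∉ E.erase x := fun h => hy.2 (mem_of_mem_erase h)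
              have heq' : insert y (E.erase x) = insert y' (E.erase x) := heq
              have : y ∈ insert y' (E.erase x) := by
                rw [← heq']; exact mem_insert_self y _
              rcases mem_insert.mp this with h | h
              · exact h
              · exact absurd h hyD
    · -- upper bound on degrees from F'
      intro E' hE'
      rw [hF'def, mem_filter, hFdef, mem_filter] at hE'
      obtain ⟨⟨hE'H, hE'card, hTE'⟩, hxE'⟩ := hE'
      calc (Finset.bipartiteBelow (fun E E' => E.erase x ⊆ E') Fx E').card
          ≤ ((E' \ T).powersetCard 1).card := by
            apply card_le_card_of_injOn (fun E => E' \ E)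
            · intro E hE
              rw [Finset.bipartiteBelow, mem_coe, mem_filter, hFxdef, mem_filter] at hE
              obtain ⟨⟨hEH, hEcard, hExT⟩, hDE'⟩ := hE
              have hxE : x ∈ E := hExT (mem_insert_self x T)
              have hTE : T ⊆ E := (insert_subset_iff.mp hExT).2
              have hinter : E' ∩ E = E.erase x := by
                apply Subset.antisymm
                · intro a ha
                  rw [mem_inter] at ha
                  exact mem_erase.mpr ⟨fun h => hxE' (h ▸ ha.1), ha.2⟩
                · exact subset_inter hDE' (erase_subset x E)
              rw [mem_coe, mem_powersetCard]
              constructor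
              · exact sdiff_subset_sdiff Subset.rfl hTE
              · have h1 : (E' ∩ E).card + (E' \ E).card = E'.card :=
                  card_inter_add_card_sdiff E' E
                have h2 : (E.erase x).card = r - 1 := by rw [card_erase_of_mem hxE, hEcard]
                have hrpos : 1 ≤ r := by rw [← hEcard]; exact card_pos.mpr ⟨x, hxE⟩
                rw [hinter, h2] at h1
                beta_reduce
                omega
            · intro E₁ hE₁ E₂ hE₂ heq
              rw [Finset.mem_coe, Finset.bipartiteBelow, mem_filter, hFxdef, mem_filter] at hE₁ hE₂
              obtain ⟨⟨hE₁H, hE₁card, hE₁xT⟩, hD₁⟩ := hE₁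
              obtain ⟨⟨hE₂H, hE₂card, hE₂xT⟩, hD₂⟩ := hE₂
              have hx₁ : x ∈ E₁ := hE₁xT (mem_insert_self x T)
              have hx₂ : x ∈ E₂ := hE₂xT (mem_insert_self x T)
              have hint₁ : E' ∩ E₁ = E₁.erase x := by
                apply Subset.antisymm
                · intro a ha
                  rw [mem_inter] at ha
                  exact mem_erase.mpr ⟨fun h => hxE' (h ▸ ha.1), ha.2⟩
                · exact subset_inter hD₁ (erase_subset x E₁)
              have hint₂ : E' ∩ E₂ = E₂.erase x := by
                apply Subset.antisymm
                · intro a ha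
                  rw [mem_inter] at ha
                  exact mem_erase.mpr ⟨fun h => hxE' (h ▸ ha.1), ha.2⟩
                · exact subset_inter hD₂ (erase_subset x E₂)
              have hinte : E' ∩ E₁ = E' ∩ E₂ := by
                have h1 : E' ∩ E₁ = E' \ (E' \ E₁) := (sdiff_sdiff_self_left E' E₁).symm
                have h2 : E' ∩ E₂ = E' \ (E' \ E₂) := (sdiff_sdiff_self_left E' E₂).symm
                have heq' : E' \ E₁ = E' \ E₂ := heq
                rw [h1, h2, heq']
              have herase : E₁.erase x = E₂.erase x := by rw [← hint₁, ← hint₂, hinte]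
              calc E₁ = insert x (E₁.erase x) := (insert_erase hx₁).symm
                _ = insert x (E₂.erase x) := by rw [herase]
                _ = E₂ := insert_erase hx₂
        _ = r - T.card := by
            rw [card_powersetCard, Nat.choose_one_right, card_sdiff_of_subset hTE', hE'card]
  -- combine
  have hFxF : Fx ⊆ F := by rw [hFx]; exact filter_subset _ _
  have hsum : Fx.card + F'.card = F.card := by
    rw [hFx, hF'def]
    exact card_filter_add_card_filter_not (fun E => x ∈ E)
  calc Fx.card * (mu H - T.card) = Fx.card * (mu H - r) + Fx.card * (r - T.card) := by
        rw [← Nat.mul_add]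
        congr 1
        omega
    _ ≤ F'.card * (r - T.card) + Fx.card * (r - T.card) :=
        Nat.add_le_add_right hdouble _
    _ = (Fx.card + F'.card) * (r - T.card) := by ring
    _ = F.card * (r - T.card) := by rw [hsum]

theorem stmt_7 {α : Type*} [DecidableEq α] (t r s : ℕ) (ht : 1 ≤ t) (htr : t ≤ r)
    (H : Finset (Finset α)) (hH : Hereditary H) (hmu : 2 * r - t ≤ mu H)
    (A B : Finset (Finset α)) (hAne : A.Nonempty) (hBne : B.Nonempty)
    (hA : A ⊆ H.filter (fun A' => A'.card = r))
    (hBuniform : ∀ B' ∈ B, B'.card = s)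
    (hBnontrivial : ¬ ∃ T : Finset α, T.card = t ∧ ∀ B' ∈ B, T ⊆ B')
    (hcross : ∀ A' ∈ A, ∀ B' ∈ B, t ≤ (A' ∩ B').card) :
    ∃ T : Finset α, T.card = t ∧
      (A.card : ℚ) < ((s : ℚ) * (r - t : ℕ)) / ((mu H - r : ℕ) : ℚ) * (Nat.choose s t : ℚ)
        * ((H.filter (fun A' => A'.card = r ∧ T ⊆ A')).card : ℚ) ∧
      ∃ B₀ ∈ B, T ⊆ B₀ := by
  classical
  obtain ⟨A₀, hA₀⟩ := hAne
  obtain ⟨B₀, hB₀⟩ := hBne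
  have hA₀' : A₀ ∈ H ∧ A₀.card = r := mem_filter.mp (hA hA₀)
  have hB₀s : B₀.card = s := hBuniform B₀ hB₀
  -- t < r
  have htlt : t < r := by
    rcases lt_or_eq_of_le htr with h | h
    · exact h
    · exfalso
      apply hBnontrivial
      refine ⟨A₀, by rw [hA₀'.2, ← h], fun B' hB' => ?_⟩
      have h1 := hcross A₀ hA₀ B' hB'
      have h2 : (A₀ ∩ B').card ≤ A₀.card := card_le_card inter_subset_left
      have h3 : A₀ ∩ B' = A₀ :=
        eq_of_subset_of_card_le inter_subset_left (by omega)
      exact inter_eq_left.mp h3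
  have hts : t ≤ s := by
    have h1 := hcross A₀ hA₀ B₀ hB₀
    have h2 : (A₀ ∩ B₀).card ≤ B₀.card := card_le_card inter_subset_right
    omega
  have hrmu : r ≤ mu H := by omega
  -- pigeonhole: choose best T
  set P := B₀.powersetCard t with hP
  have hPne : P.Nonempty := by
    obtain ⟨T, hT1, hT2⟩ := Finset.exists_subset_card_eq (show t ≤ B₀.card by omega)
    exact ⟨T, mem_powersetCard.mpr ⟨hT1, hT2⟩⟩
  obtain ⟨T, hTP, hTmax⟩ :=
    P.exists_max_image (fun T => (A.filter (fun A' => T ⊆ A')).card) hPne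
  rw [mem_powersetCard] at hTP
  refine ⟨T, hTP.2, ?_, B₀, hB₀, hTP.1⟩
  set AT := A.filter (fun A' => T ⊆ A') with hATdef
  have cover1 : A ⊆ P.biUnion (fun T' => A.filter (fun A' => T' ⊆ A')) := by
    intro A' hA'
    have h1 : t ≤ (A' ∩ B₀).card := hcross A' hA' B₀ hB₀
    obtain ⟨T', hT'sub, hT'card⟩ := Finset.exists_subset_card_eq h1
    rw [mem_biUnion]
    exact ⟨T', mem_powersetCard.mpr ⟨hT'sub.trans inter_subset_right, hT'card⟩,
      mem_filter.mpr ⟨hA', hT'sub.trans inter_subset_left⟩⟩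
  have hPcard : P.card = Nat.choose s t := by rw [hP, card_powersetCard, hB₀s]
  have step1 : A.card ≤ Nat.choose s t * AT.card := by
    calc A.card ≤ (P.biUnion (fun T' => A.filter (fun A' => T' ⊆ A'))).card :=
          card_le_card cover1
      _ ≤ ∑ T' ∈ P, (A.filter (fun A' => T' ⊆ A')).card := card_biUnion_le
      _ ≤ P.card • AT.card := sum_le_card_nsmul _ _ _ (fun T' hT' => hTmax T' hT')
      _ = Nat.choose s t * AT.card := by rw [hPcard, smul_eq_mul]
  -- AT nonempty
  have hATne : AT.Nonempty := by
    rcases AT.eq_empty_or_nonempty with h | h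
    · exfalso
      rw [h, card_empty, Nat.mul_zero] at step1
      have : 0 < A.card := card_pos.mpr ⟨A₀, hA₀⟩
      omega
    · exact h
  obtain ⟨A₂, hA₂⟩ := hATne
  rw [hATdef, mem_filter] at hA₂
  have hA₂' : A₂ ∈ H ∧ A₂.card = r := mem_filter.mp (hA hA₂.1)
  set F := H.filter (fun A' => A'.card = r ∧ T ⊆ A') with hFdef
  have hFpos : 0 < F.card := card_pos.mpr ⟨A₂, mem_filter.mpr ⟨hA₂'.1, hA₂'.2, hA₂.2⟩⟩
  -- B₁ not containing T
  obtain ⟨B₁, hB₁, hTB₁⟩ : ∃ B₁ ∈ B, ¬ T ⊆ B₁ := by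
    by_contra h
    push_neg at h
    exact hBnontrivial ⟨T, hTP.2, h⟩
  have hTB₁card : (T ∩ B₁).card < t := by
    have h1 : (T ∩ B₁).card ≤ t := by
      have := card_le_card (inter_subset_left : T ∩ B₁ ⊆ T)
      omega
    rcases lt_or_eq_of_le h1 with h | h
    · exact h
    · exfalso
      have h3 : T ∩ B₁ = T :=
        eq_of_subset_of_card_le inter_subset_left (by rw [h, hTP.2])
      exact hTB₁ (inter_eq_left.mp h3)
  -- covering AT by insert x T
  have cover2 : AT ⊆ (B₁ \ T).biUnion (fun x => A.filter (fun A' => insert x T ⊆ A')) := by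
    intro A' hA'
    rw [hATdef, mem_filter] at hA'
    have h1 : t ≤ (A' ∩ B₁).card := hcross A' hA'.1 B₁ hB₁
    have h2 : ¬ (A' ∩ B₁ ⊆ T) := by
      intro hsub
      have h3 : A' ∩ B₁ ⊆ T ∩ B₁ := fun a ha =>
        mem_inter.mpr ⟨hsub ha, (mem_inter.mp ha).2⟩
      have := card_le_card h3
      omega
    obtain ⟨x, hx1, hx2⟩ := not_subset.mp h2
    rw [mem_biUnion]
    exact ⟨x, mem_sdiff.mpr ⟨(mem_inter.mp hx1).2, hx2⟩,
      mem_filter.mpr ⟨hA'.1, insert_subset (mem_inter.mp hx1).1 hA'.2⟩⟩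
  -- per-x bound
  have perx : ∀ x ∈ B₁ \ T,
      (A.filter (fun A' => insert x T ⊆ A')).card * (mu H - t) ≤ F.card * (r - t) := by
    intro x hxmem
    have hxT : x ∉ T := (mem_sdiff.mp hxmem).2
    have hsub : A.filter (fun A' => insert x T ⊆ A') ⊆
        H.filter (fun E => E.card = r ∧ insert x T ⊆ E) := by
      intro A' hA'
      rw [mem_filter] at hA' ⊢
      have hA'' := mem_filter.mp (hA hA'.1)
      exact ⟨hA''.1, hA''.2, hA'.2⟩
    have hkey := key_count hH hxT (hTP.2 ▸ htr) hrmu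
    rw [hTP.2] at hkey
    calc (A.filter (fun A' => insert x T ⊆ A')).card * (mu H - t)
        ≤ (H.filter (fun E => E.card = r ∧ insert x T ⊆ E)).card * (mu H - t) :=
          Nat.mul_le_mul_right _ (card_le_card hsub)
      _ ≤ F.card * (r - t) := hkey
  have step2 : AT.card ≤ ∑ x ∈ B₁ \ T, (A.filter (fun A' => insert x T ⊆ A')).card :=
    le_trans (card_le_card cover2) card_biUnion_le
  have hB₁T : (B₁ \ T).card ≤ s := by
    have h1 := card_le_card (sdiff_subset : B₁ \ T ⊆ B₁)
    have h2 := hBuniform B₁ hB₁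
    omega
  have step3 : AT.card * (mu H - t) ≤ s * (F.card * (r - t)) := by
    calc AT.card * (mu H - t)
        ≤ (∑ x ∈ B₁ \ T, (A.filter (fun A' => insert x T ⊆ A')).card) * (mu H - t) :=
          Nat.mul_le_mul_right _ step2
      _ = ∑ x ∈ B₁ \ T, (A.filter (fun A' => insert x T ⊆ A')).card * (mu H - t) :=
          Finset.sum_mul _ _ _
      _ ≤ ∑ _x ∈ B₁ \ T, F.card * (r - t) := Finset.sum_le_sum perx
      _ = (B₁ \ T).card * (F.card * (r - t)) := by rw [Finset.sum_const, smul_eq_mul]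
      _ ≤ s * (F.card * (r - t)) := Nat.mul_le_mul_right _ hB₁T
  have stepN : A.card * (mu H - t) ≤ Nat.choose s t * (s * (F.card * (r - t))) := by
    calc A.card * (mu H - t) ≤ Nat.choose s t * AT.card * (mu H - t) :=
          Nat.mul_le_mul_right _ step1
      _ = Nat.choose s t * (AT.card * (mu H - t)) := by ring
      _ ≤ Nat.choose s t * (s * (F.card * (r - t))) := Nat.mul_le_mul_left _ step3
  -- pass to ℚ
  have hc : 0 < Nat.choose s t := Nat.choose_pos hts
  have hspos : 0 < s := by omega
  have hmur : 0 < mu H - r := by omega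
  have hmut : mu H - r < mu H - t := by omega
  set Y : ℕ := Nat.choose s t * (s * (F.card * (r - t))) with hY
  have hYpos : 0 < Y := by
    have : 0 < r - t := by omega
    positivity
  have q1 : (A.card : ℚ) ≤ (Y : ℚ) / ((mu H - t : ℕ) : ℚ) := by
    rw [le_div_iff₀ (by exact_mod_cast (show 0 < mu H - t by omega))]
    exact_mod_cast stepN
  have q2 : (Y : ℚ) / ((mu H - t : ℕ) : ℚ) < (Y : ℚ) / ((mu H - r : ℕ) : ℚ) :=
    div_lt_div_of_pos_left (by exact_mod_cast hYpos) (by exact_mod_cast hmur)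
      (by exact_mod_cast hmut)
  have q3 : (Y : ℚ) / ((mu H - r : ℕ) : ℚ) =
      ((s : ℚ) * ((r - t : ℕ) : ℚ)) / ((mu H - r : ℕ) : ℚ) * (Nat.choose s t : ℚ)
        * (F.card : ℚ) := by
    rw [hY]
    push_cast
    ring
  calc (A.card : ℚ) ≤ (Y : ℚ) / ((mu H - t : ℕ) : ℚ) := q1
    _ < (Y : ℚ) / ((mu H - r : ℕ) : ℚ) := q2
    _ = _ := q3
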